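/- arXiv:2009.09466 — 10 statements merged into one kernel-verified Lean document; each statement's English description precedes it below -/
import Mathlib

section
/- Let B = ⊕_{a=1}^d M_{N_a}(ℂ) be a finite quantum space in standard form with state ψ(x) = Σ_a Tr(Q_a x_a) and suppose Tr(Q_a^{-1}) = δ² for all a, where δ > 0. Let D be a unital C*-algebra containing elements s^{(a)}_{ij} (for 1 ≤ a ≤ d, 1 ≤ i,j ≤ N_a) satisfying the Cuntz relations: (s^{(a)}_{ij})^* s^{(b)}_{kl} = δ_{ab} δ_{ik} δ_{jl} · 1 for all admissible indices, and Σ_{a,i,j} s^{(a)}_{ij} (s^{(a)}_{ij})^* = 1. Define T^{(a)}_{ij} := q_a(i)^{-1/2} δ^{-1} · s^{(a)}_{ij}. Then for all a, i, j: (1) Σ_{r,s=1}^{N_a} T^{(a)}_{ir} (T^{(a)}_{sr})^* T^{(a)}_{sj} = T^{(a)}_{ij}, and (2) Σ_{r=1}^{N_a} (T^{(a)}_{ri})^* T^{(a)}_{rj} = δ_{ij} · δ² · Σ_{b=1}^d Σ_{k,l=1}^{N_b} q_b(k) · T^{(b)}_{kl} (T^{(b)}_{kl})^*. (These are the defining relations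 of the quantum Cuntz–Krieger algebra FO(K(B,ψ)) of the complete quantum graph, so the assignment S^{(a)}_{ij} ↦ T^{(a)}_{ij} defines a surjective *-homomorphism FO(K(B,ψ)) → O_n with n = dim B.) -/
theorem statement_3 {d : ℕ} {N : Fin d → ℕ} (q : ∀ a, Fin (N a) → ℝ)
    (hq : ∀ a i, 0 < q a i) (hstate : ∑ a, ∑ i, q a i = 1)
    (δ : ℝ) (hδ : 0 < δ) (hδform : ∀ a, ∑ k, (q a k)⁻¹ = δ ^ 2)
    (D : Type*) [NormedRing D] [StarRing D] [CStarRing D] [CompleteSpace D]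
    [NormedAlgebra ℂ D] [StarModule ℂ D]
    -- a family of Cuntz isometries indexed by the matrix units of B
    (s : ∀ a : Fin d, Fin (N a) → Fin (N a) → D)
    (hrel1 : ∀ (a : Fin d) (i j k l : Fin (N a)),
      star (s a i j) * s a k l = if i = k ∧ j = l then 1 else 0)
    (hrel2 : ∀ (a b : Fin d), a ≠ b → ∀ (i j : Fin (N a)) (k l : Fin (N b)),
      star (s a i j) * s b k l = 0)
    (hrel3 : ∑ a, ∑ i, ∑ j, s a i j * star (s a i j) = 1)
    -- the rescaled elements T^{(a)}_{ij} = q_a(i)^{-1/2} δ^{-1} s^{(a)}_{ij}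
    (T : ∀ a : Fin d, Fin (N a) → Fin (N a) → D)
    (hT : ∀ a i j, T a i j = (((Real.sqrt (q a i))⁻¹ * δ⁻¹ : ℝ) : ℂ) • s a i j) :
    (∀ (a : Fin d) (i j : Fin (N a)),
        ∑ r, ∑ t, T a i r * star (T a t r) * T a t j = T a i j) ∧
    (∀ (a : Fin d) (i j : Fin (N a)),
        ∑ r, star (T a r i) * T a r j
          = if i = j then ((δ ^ 2 : ℝ) : ℂ) •
              ∑ b, ∑ k, ∑ l, ((q b k : ℝ) : ℂ) • (T b k l * star (T b k l))
            else 0) := by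
  have hδ2 : (δ ^ 2 : ℝ) ≠ 0 := pow_ne_zero 2 hδ.ne'
  have hc2 : ∀ a (i : Fin (N a)),
      ((Real.sqrt (q a i))⁻¹ * δ⁻¹) * ((Real.sqrt (q a i))⁻¹ * δ⁻¹)
        = (q a i)⁻¹ * (δ ^ 2)⁻¹ :=
    fun a i =>
      calc ((Real.sqrt (q a i))⁻¹ * δ⁻¹) * ((Real.sqrt (q a i))⁻¹ * δ⁻¹)
          = (Real.sqrt (q a i) * Real.sqrt (q a i))⁻¹ * (δ * δ)⁻¹ := by
            rw [mul_inv, mul_inv]; ring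
        _ = (q a i)⁻¹ * (δ ^ 2)⁻¹ := by
            rw [Real.mul_self_sqrt (hq a i).le, ← pow_two]
  have hqsum : ∀ a : Fin d, ∑ t : Fin (N a), (q a t)⁻¹ * (δ ^ 2)⁻¹ = 1 := by
    intro a
    rw [← Finset.sum_mul, hδform, mul_inv_cancel₀ hδ2]
  constructor
  · intro a i j
    have h1 : ∀ r t : Fin (N a), T a i r * star (T a t r) * T a t j
        = if r = j then
            ((((Real.sqrt (q a i))⁻¹ * δ⁻¹) * ((q a t)⁻¹ * (δ ^ 2)⁻¹) : ℝ) : ℂ) • s a i j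
          else 0 := by
      intro r t
      simp only [hT, star_smul, Complex.star_def, Complex.conj_ofReal,
        smul_mul_assoc, mul_smul_comm, smul_smul]
      rw [mul_assoc (s a i r), hrel1]
      by_cases h : r = j
      · subst h
        simp only [and_self, eq_self_iff_true, if_true, mul_one]
        rw [← hc2 a t]
        congr 1
        push_cast
        ring
      · simp [h]
    simp only [h1]
    rw [Finset.sum_comm]
    simp only [Finset.sum_ite_eq', Finset.mem_univ, if_true]
    rw [← Finset.sum_smul, hT]
    congr 1
    rw [← Complex.ofReal_sum]
    congr 1
    rw [← Finset.mul_sum, hqsum, mul_one]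
  · intro a i j
    have h2 : ∀ r : Fin (N a), star (T a r i) * T a r j
        = if i = j then (((q a r)⁻¹ * (δ ^ 2)⁻¹ : ℝ) : ℂ) • (1 : D) else 0 := by
      intro r
      simp only [hT, star_smul, Complex.star_def, Complex.conj_ofReal,
        smul_mul_assoc, mul_smul_comm, smul_smul, hrel1]
      by_cases h : i = j
      · subst h
        simp only [and_self, eq_self_iff_true, if_true]
        rw [← hc2 a r]
        congr 1
        push_cast
        ring
      · simp [h]
    simp only [h2]
    by_cases h : i = j
    · subst h
      simp only [eq_self_iff_true, if_true]
      rw [← Finset.sum_smul, ← Complex.ofReal_sum, hqsum]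
      have hR : ∀ (b : Fin d) (k l : Fin (N b)),
          ((q b k : ℝ) : ℂ) • (T b k l * star (T b k l))
            = (((δ ^ 2)⁻¹ : ℝ) : ℂ) • (s b k l * star (s b k l)) := by
        intro b k l
        simp only [hT, star_smul, Complex.star_def, Complex.conj_ofReal,
          smul_mul_assoc, mul_smul_comm, smul_smul]
        have hk : ((Real.sqrt (q b k) : ℝ) : ℂ) * ((Real.sqrt (q b k) : ℝ) : ℂ)
            = ((q b k : ℝ) : ℂ) := by
          norm_cast
          exact Real.mul_self_sqrt (hq b k).le
        have hs0 : ((Real.sqrt (q b k) : ℝ) : ℂ) ≠ 0 := by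
          exact_mod_cast (Real.sqrt_pos.mpr (hq b k)).ne'
        have hδ0 : ((δ : ℝ) : ℂ) ≠ 0 := by exact_mod_cast hδ.ne'
        congr 1
        push_cast
        rw [← hk]
        field_simp
      simp only [hR, ← Finset.smul_sum]
      rw [hrel3, smul_smul, ← Complex.ofReal_mul, mul_inv_cancel₀ hδ2]
    · simp [h]
end

section
/- Let N ≥ 1 and let {w_x}_{x∈X} be a unitary error basis for M_N(ℂ). Define V^{rs}_x := (1/N) · w_x^* e_{rs} w_x ∈ M_N(ℂ) for 1 ≤ r,s ≤ N and x ∈ X, where e_{rs} are the standard matrix units. Then for all admissible indices: (i) Σ_{t=1}^N V^{rt}_x V^{ts}_y = δ_{xy} V^{rs}_x; (ii) V^{ji}_x V^{sr}_x = δ_{is} (1/N) V^{jr}_x; (iii) (V^{ij}_x)^* = V^{ji}_x; (iv) N · Σ_{i=1}^N V^{ii}_x = 1; (v) Σ_{x∈X} V^{ij}_x = δ_{ij} · 1. (These are exactly the defining relations of the linking algebra of the quantum isomorphism between the quantum graphs on ℂ^{N²} and on M_N(ℂ), so the V^{rs}_x determine a unital *-representation of that linking algebra on M_N(ℂ).)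 -/
/-!
Relations (ii)–(iv) are the matrix-unit relations `e_{ji} e_{sr} = δ_{is} e_{jr}`, `e_{ij}ᴴ = e_{ji}`
and `∑ e_{ii} = 1` transported by the unitary `w_x`. For (i), `∑_t e_{rt} A e_{ts} = tr(A) e_{rs}`
collapses the middle factor `w_x w_yᴴ` to its trace, which orthogonality makes `N δ_{xy}`.
For (v), the `N²` vectorised `w_x` are the rows of a square matrix `U` with `U Uᴴ = N • 1`;
hence also `Uᴴ U = N • 1`, which is the completeness relation
`∑_x conj (w_x i k) * w_x j l = N δ_{ij} δ_{kl}`.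
-/

open scoped Matrix

namespace Matrix

section MatrixUnits

variable {R : Type*} [CommSemiring R] {n : Type*} [Fintype n] [DecidableEq n]

theorem sum_mul_single_mul_mul_mul_single_mul (A B C D : Matrix n n R) (r s : n) :
    ∑ t, A * single r t 1 * B * (C * single t s 1 * D) = (B * C).trace • (A * single r s 1 * D) := by
  have hterm : ∀ t, A * single r t 1 * B * (C * single t s 1 * D)
      = (B * C) t t • (A * single r s 1 * D) := fun t => by
    rw [show A * single r t 1 * B * (C * single t s 1 * D)
        = A * (single r t 1 * (B * C) * single t s 1) * D by simp only [Matrix.mul_assoc],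
      single_mul_mul_single, one_mul, mul_one, ← Matrix.smul_mul, ← Matrix.mul_smul, smul_single,
      smul_eq_mul, mul_one]
  simp only [hterm, ← Finset.sum_smul]
  rfl

theorem single_one_mul_single_one (i j k s : n) :
    single i j (1 : R) * single k s 1 = if j = k then single i s 1 else 0 := by
  split_ifs with h
  · rw [h, single_mul_single_same, one_mul]
  · exact single_mul_single_of_ne (h := h) ..

end MatrixUnits

variable {K : Type*} [Field K] [StarRing K]

theorem conjTranspose_mul_self_eq_smul_one_of_equiv {X P : Type*} [Fintype X] [Fintype P]
    [DecidableEq X] [DecidableEq P] {c : K} (hc : c ≠ 0) (e : X ≃ P) {U : Matrix X P K}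
    (h : U * Uᴴ = c • 1) : Uᴴ * U = c • 1 := by
  have hinv : U * (c⁻¹ • Uᴴ) = 1 := by
    rw [Matrix.mul_smul, h, smul_smul, inv_mul_cancel₀ hc, one_smul]
  have hinv' : c⁻¹ • (Uᴴ * U) = 1 := by
    rw [← Matrix.smul_mul]
    exact (mul_eq_one_comm_of_equiv e).mp hinv
  rw [← hinv', smul_smul, mul_inv_cancel₀ hc, one_smul]

theorem conjTranspose_mul_single_mul_apply {m n : Type*} [Fintype m] [DecidableEq m]
    (A B : Matrix m n K) (i j : m) (k l : n) :
    (Aᴴ * single i j (1 : K) * B) k l = star (A i k) * B j l := by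
  simp [Matrix.mul_apply, Matrix.single, ite_and, Finset.sum_ite_eq, mul_comm]

theorem sum_conjTranspose_mul_single_mul_of_trace_conjTranspose_mul
    {X m n : Type*} [Fintype X] [DecidableEq X] [Fintype m] [DecidableEq m]
    [Fintype n] [DecidableEq n] {c : K} (hc : c ≠ 0)
    (hX : Fintype.card X = Fintype.card n * Fintype.card m) (w : X → Matrix m n K)
    (horth : ∀ x y, ((w x)ᴴ * w y).trace = if x = y then c else 0) (i j : m) :
    ∑ x, (w x)ᴴ * single i j (1 : K) * w x = if i = j then c • 1 else 0 := by
  set U : Matrix X (n × m) K := of fun x => (w x).vec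
  have hU : U * Uᴴ = c • 1 := by
    ext x y
    have htr := star_vec_dotProduct_vec (w y) (w x)
    rw [dotProduct_comm, horth] at htr
    simpa [Matrix.mul_apply, dotProduct, U, Matrix.one_apply, eq_comm] using htr
  have hcompl := conjTranspose_mul_self_eq_smul_one_of_equiv hc
    (Fintype.equivOfCardEq (by rw [hX, Fintype.card_prod])) hU
  ext k l
  have hentry := congrFun (congrFun hcompl (k, i)) (l, j)
  simp only [Matrix.mul_apply, conjTranspose_apply, U, of_apply, vec, smul_apply, one_apply,
    Prod.mk.injEq] at hentry
  rw [sum_apply]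
  simp only [conjTranspose_mul_single_mul_apply, hentry]
  by_cases hij : i = j <;> simp [hij, one_apply]

variable {n : Type*} [Fintype n] [DecidableEq n]

def scaledConjSingle (u : Matrix n n K) (r s : n) : Matrix n n K :=
  (Fintype.card n : K)⁻¹ • (uᴴ * single r s 1 * u)

variable (u v : Matrix n n K)

theorem scaledConjSingle_mul_scaledConjSingle (hu : u * uᴴ = 1) (j i s r : n) :
    scaledConjSingle u j i * scaledConjSingle u s r
      = if i = s then (Fintype.card n : K)⁻¹ • scaledConjSingle u j r else 0 := by
  have hprod : uᴴ * single j i 1 * u * (uᴴ * single s r 1 * u)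
      = uᴴ * (single j i 1 * (u * uᴴ) * single s r 1) * u := by
    simp only [Matrix.mul_assoc]
  simp only [scaledConjSingle, Matrix.smul_mul, Matrix.mul_smul, hprod, hu, Matrix.mul_one,
    single_one_mul_single_one]
  split_ifs <;> simp

theorem sum_scaledConjSingle_mul_scaledConjSingle_self (hu : u * uᴴ = 1) (r s : n) :
    ∑ t, scaledConjSingle u r t * scaledConjSingle u t s = scaledConjSingle u r s := by
  simp only [scaledConjSingle_mul_scaledConjSingle u hu, if_pos, Finset.sum_const,
    Finset.card_univ, ← Nat.cast_smul_eq_nsmul K, smul_smul]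
  have hscalar : (Fintype.card n : K) * (Fintype.card n : K)⁻¹ * (Fintype.card n : K)⁻¹
      = (Fintype.card n : K)⁻¹ := by
    simpa using inv_mul_mul_self (Fintype.card n : K)⁻¹
  rw [scaledConjSingle, smul_smul, hscalar]

theorem sum_scaledConjSingle_mul_scaledConjSingle_of_trace_eq_zero (h : (vᴴ * u).trace = 0)
    (r s : n) : ∑ t, scaledConjSingle u r t * scaledConjSingle v t s = 0 := by
  simp only [scaledConjSingle, Matrix.smul_mul, Matrix.mul_smul, ← Finset.smul_sum,
    sum_mul_single_mul_mul_mul_single_mul, trace_mul_comm u, h, zero_smul, smul_zero]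

theorem conjTranspose_scaledConjSingle (i j : n) :
    (scaledConjSingle u i j)ᴴ = scaledConjSingle u j i := by
  simp [scaledConjSingle, Matrix.mul_assoc]

theorem card_smul_sum_scaledConjSingle_self (hn : (Fintype.card n : K) ≠ 0) (hu : uᴴ * u = 1) :
    (Fintype.card n : K) • ∑ i, scaledConjSingle u i i = 1 := by
  simp only [scaledConjSingle, ← Finset.smul_sum, ← Matrix.sum_mul, ← Matrix.mul_sum,
    sum_single_one, Matrix.mul_one, hu, smul_smul, mul_inv_cancel₀ hn, one_smul]

theorem sum_scaledConjSingle {X : Type*} [Fintype X] [DecidableEq X]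
    (hX : Fintype.card X = Fintype.card n * Fintype.card n) (w : X → Matrix n n K)
    (horth : ∀ x y, ((w x)ᴴ * w y).trace = if x = y then (Fintype.card n : K) else 0)
    (hn : (Fintype.card n : K) ≠ 0) (i j : n) :
    ∑ x, scaledConjSingle (w x) i j = if i = j then 1 else 0 := by
  simp only [scaledConjSingle, ← Finset.smul_sum,
    sum_conjTranspose_mul_single_mul_of_trace_conjTranspose_mul hn hX w horth, smul_ite,
    smul_smul, inv_mul_cancel₀ hn, one_smul, smul_zero]

end Matrix

open Matrix

theorem statement_4 (N : ℕ) (hN : 1 ≤ N) (X : Type*) [Fintype X] [DecidableEq X]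
    (hX : Fintype.card X = N ^ 2)
    -- a unitary error basis {w_x} for M_N(ℂ)
    (w : X → Matrix (Fin N) (Fin N) ℂ)
    (hunit : ∀ x, (w x)ᴴ * w x = 1)
    (horth : ∀ x y, (N : ℂ)⁻¹ * Matrix.trace ((w x)ᴴ * w y) = if x = y then 1 else 0)
    -- the elements V^{rs}_x = (1/N) w_x^* e_{rs} w_x
    (V : Fin N → Fin N → X → Matrix (Fin N) (Fin N) ℂ)
    (hV : ∀ r s x, V r s x = (N : ℂ)⁻¹ • ((w x)ᴴ * Matrix.single r s 1 * w x)) :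
    (∀ (r s : Fin N) (x y : X),
        ∑ t, V r t x * V t s y = if x = y then V r s x else 0) ∧
    (∀ (i j r s : Fin N) (x : X),
        V j i x * V s r x = if i = s then (N : ℂ)⁻¹ • V j r x else 0) ∧
    (∀ (i j : Fin N) (x : X), (V i j x)ᴴ = V j i x) ∧
    (∀ x : X, (N : ℂ) • ∑ i, V i i x = 1) ∧
    (∀ i j : Fin N, ∑ x, V i j x = if i = j then 1 else 0) := by
  have hcard : (Fintype.card (Fin N) : ℂ) = N := by rw [Fintype.card_fin]
  simp only [← hcard] at horth hV ⊢
  have hN0 : (Fintype.card (Fin N) : ℂ) ≠ 0 := by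
    rw [Fintype.card_fin, Nat.cast_ne_zero]
    omega
  have htrace (x y : X) :
      ((w x)ᴴ * w y).trace = if x = y then (Fintype.card (Fin N) : ℂ) else 0 := by
    rw [(inv_mul_eq_iff_eq_mul₀ hN0).mp (horth x y), mul_ite, mul_one, mul_zero]
  have hunit' (x : X) : w x * (w x)ᴴ = 1 := mul_eq_one_comm.mp (hunit x)
  obtain rfl : V = fun r s x => scaledConjSingle (w x) r s := funext₃ hV
  refine ⟨fun r s x y => ?_, fun i j r s x => ?_, fun i j x => ?_, fun x => ?_, fun i j => ?_⟩
  · split_ifs with hxy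
    · subst hxy
      exact sum_scaledConjSingle_mul_scaledConjSingle_self _ (hunit' x) r s
    · refine sum_scaledConjSingle_mul_scaledConjSingle_of_trace_eq_zero _ _ ?_ r s
      rw [htrace, if_neg (Ne.symm hxy)]
  · exact scaledConjSingle_mul_scaledConjSingle _ (hunit' x) j i s r
  · exact conjTranspose_scaledConjSingle _ i j
  · exact card_smul_sum_scaledConjSingle_self _ hN0 (hunit x)
  · exact sum_scaledConjSingle (by rw [hX, Fintype.card_fin, sq]) w htrace hN0 i j
end

section
/- Let B = ⊕_{a=1}^d M_{N_a}(ℂ) be a finite quantum space in standard form with state ψ(x) = Σ_a Tr(Q_a x_a) with diagonal entries q_a(i) > 0, let δ > 0 with Tr(Q_a^{-1}) = δ² for all a, and let m = δ² ∈ ℕ. Let A be a unital C*-algebra containing elements v^x_{ija} (for x ∈ Fin m, 1 ≤ a ≤ d, 1 ≤ i,j ≤ N_a) satisfying: (1) v^x_{kla} v^x_{rsb} = δ_{ab} δ_{lr} v^x_{ksa}; (2) Σ_{l=1}^{N_a} q_a(l)^{-1} v^x_{mla} v^y_{lka} = δ_{xy} δ² v^x_{mka}; (3) (v^x_{kla})^*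 = v^x_{lka}; (4) Σ_{x ∈ Fin m} v^x_{kla} = δ_{kl} δ² q_a(k) · 1; (5) Σ_{a=1}^d Σ_{k=1}^{N_a} v^x_{kka} = 1; for all admissible indices. Define u^x_{ija} := q_a(j)^{-1/2} δ^{-1} v^x_{ija}. Then the rectangular matrix u = (u^x_{ija}) is unitary: Σ_{x ∈ Fin m} (u^x_{ija})^* u^x_{klb} = δ_{ab} δ_{ik} δ_{jl} · 1 for all admissible a, b, i, j, k, l, and Σ_{a=1}^d Σ_{i,j=1}^{N_a} u^x_{ija} (u^y_{ija})^* = δ_{xy} · 1 for all x, y ∈ Fin m. -/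
/-!
Since `√q⁻¹ · √q⁻¹ = q⁻¹`, both unitarity relations for `u` reduce to the relations of `v`.
In `∑ₓ (u^x_{ija})^* u^x_{klb}` the star turns the factor into `v^x_{jia} v^x_{klb}`, which by (1)
collapses to `δ_{ab} δ_{ik} v^x_{jla}`, and (4) sums this over `x` to `δ_{jl} δ² q_a(j)`, cancelling
the weight `q_a(j)⁻¹ δ⁻²`. In `∑_{a,i,j} u^x_{ija} (u^y_{ija})^*` the weight `q_a(j)⁻¹` is exactly
the one appearing in (2), which collapses the sum over `j` to `δ_{xy} δ² v^x_{iia}`; (5) then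
sums the diagonal to `1`.
-/

open Finset

section StarAlgebra

variable {A : Type*} [Ring A] [StarRing A] [Algebra ℂ A] [StarModule ℂ A]

lemma star_ofReal_smul_mul_ofReal_smul (r s : ℝ) (a b : A) :
    star ((r : ℂ) • a) * ((s : ℂ) • b) = ((r * s : ℝ) : ℂ) • (star a * b) := by
  rw [star_smul, Complex.star_def, Complex.conj_ofReal, smul_mul_smul_comm, Complex.ofReal_mul]

lemma ofReal_smul_mul_star_ofReal_smul (r s : ℝ) (a b : A) :
    (r : ℂ) • a * star ((s : ℂ) • b) = ((r * s : ℝ) : ℂ) • (a * star b) := by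
  rw [star_smul, Complex.star_def, Complex.conj_ofReal, smul_mul_smul_comm, Complex.ofReal_mul]

lemma sum_star_smul_mul_smul_eq {ι κ : Type*} [Fintype ι] [DecidableEq κ]
    (v : ι → κ → κ → A) (e w : κ → ℝ)
    (hmul : ∀ x k l r s, v x k l * v x r s = if l = r then v x k s else 0)
    (hstar : ∀ x k l, star (v x k l) = v x l k)
    (hsum : ∀ k l, ∑ x, v x k l = if k = l then (e k : ℂ) • 1 else 0) (i j k l : κ) :
    ∑ x, star ((w j : ℂ) • v x i j) * ((w l : ℂ) • v x k l)
      = if i = k ∧ j = l then ((w j * w j * e j : ℝ) : ℂ) • 1 else 0 := by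
  simp only [star_ofReal_smul_mul_ofReal_smul, hstar, hmul, ← smul_sum]
  by_cases hik : i = k
  · subst hik
    by_cases hjl : j = l
    · subst hjl
      simp only [and_self, if_true, hsum, smul_smul, Complex.ofReal_mul]
    · simp [hsum, hjl]
  · simp [hik]

end StarAlgebra

lemma inv_sqrt_mul_inv_mul_self {q : ℝ} (hq : 0 ≤ q) (δ : ℝ) :
    ((√q)⁻¹ * δ⁻¹) * ((√q)⁻¹ * δ⁻¹) = (δ ^ 2)⁻¹ * q⁻¹ := by
  rw [mul_mul_mul_comm, ← mul_inv, Real.mul_self_sqrt hq, ← mul_inv, ← sq, mul_comm]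

lemma sum_sum_sum_inv_smul_mul_eq {A : Type*} [Semiring A] [Module ℂ A] {ι β : Type*}
    [DecidableEq ι] [Fintype β] {κ : β → Type*} [∀ a, Fintype (κ a)]
    (v : ι → ∀ a, κ a → κ a → A) (q : ∀ a, κ a → ℝ) (c : ℝ)
    (hrow : ∀ x y a i k, ∑ l, (((q a l)⁻¹ : ℝ) : ℂ) • (v x a i l * v y a l k)
        = if x = y then (c : ℂ) • v x a i k else 0)
    (hdiag : ∀ x, ∑ a, ∑ k, v x a k k = 1) (x y : ι) :
    ∑ a, ∑ i, ∑ j, (((q a j)⁻¹ : ℝ) : ℂ) • (v x a i j * v y a j i)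
      = if x = y then (c : ℂ) • 1 else 0 := by
  simp only [hrow]
  split_ifs with hxy
  · subst hxy
    simp only [← smul_sum, hdiag]
  · simp

theorem statement_9_general {d : ℕ} {N : Fin d → ℕ} (q : ∀ a, Fin (N a) → ℝ)
    (hq : ∀ a i, 0 < q a i)
    (δ : ℝ) (hδ : 0 < δ)
    (m : ℕ)
    (A : Type*) [NormedRing A] [StarRing A]
    [NormedAlgebra ℂ A] [StarModule ℂ A]
    -- generators v^x_{ija} of the linking algebra C(G⁺(K_{δ²}, K(B,ψ)))
    (v : Fin m → ∀ a : Fin d, Fin (N a) → Fin (N a) → A)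
    (h1a : ∀ (x : Fin m) (a : Fin d) (k l r s : Fin (N a)),
      v x a k l * v x a r s = if l = r then v x a k s else 0)
    (h1b : ∀ (x : Fin m) (a b : Fin d), a ≠ b → ∀ (k l : Fin (N a)) (r s : Fin (N b)),
      v x a k l * v x b r s = 0)
    (h2 : ∀ (x y : Fin m) (a : Fin d) (i k : Fin (N a)),
      ∑ l, (((q a l)⁻¹ : ℝ) : ℂ) • (v x a i l * v y a l k)
        = if x = y then ((δ ^ 2 : ℝ) : ℂ) • v x a i k else 0)
    (h3 : ∀ (x : Fin m) (a : Fin d) (k l : Fin (N a)), star (v x a k l) = v x a l k)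
    (h4 : ∀ (a : Fin d) (k l : Fin (N a)),
      ∑ x, v x a k l = if k = l then ((δ ^ 2 * q a k : ℝ) : ℂ) • 1 else 0)
    (h5 : ∀ x : Fin m, ∑ a, ∑ k, v x a k k = 1)
    -- the rescaled entries u^x_{ija} = q_a(j)^{-1/2} δ^{-1} v^x_{ija}
    (u : Fin m → ∀ a : Fin d, Fin (N a) → Fin (N a) → A)
    (hu : ∀ x a i j, u x a i j = (((Real.sqrt (q a j))⁻¹ * δ⁻¹ : ℝ) : ℂ) • v x a i j) :
    (∀ (a : Fin d) (i j k l : Fin (N a)),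
      ∑ x, star (u x a i j) * u x a k l = if i = k ∧ j = l then 1 else 0) ∧
    (∀ (a b : Fin d), a ≠ b → ∀ (i j : Fin (N a)) (k l : Fin (N b)),
      ∑ x, star (u x a i j) * u x b k l = 0) ∧
    (∀ x y : Fin m,
      ∑ a, ∑ i, ∑ j, u x a i j * star (u y a i j) = if x = y then 1 else 0) := by
  have hscale a j := inv_sqrt_mul_inv_mul_self (hq a j).le δ
  refine ⟨fun a i j k l => ?_, fun a b hab i j k l => ?_, fun x y => ?_⟩
  · simp only [hu]
    rw [sum_star_smul_mul_smul_eq (fun x => v x a) (fun k => δ ^ 2 * q a k)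
      (fun j => (√(q a j))⁻¹ * δ⁻¹) (h1a · a) (h3 · a) (h4 a), hscale]
    have hone : (δ ^ 2)⁻¹ * (q a j)⁻¹ * (δ ^ 2 * q a j) = 1 := by
      field_simp [hδ.ne', (hq a j).ne']
    simp only [hone, Complex.ofReal_one, one_smul]
  · simp [hu, h3, h1b _ a b hab]
  · simp only [hu, ofReal_smul_mul_star_ofReal_smul, h3, hscale]
    simp only [Complex.ofReal_mul, mul_smul, ← smul_sum]
    rw [sum_sum_sum_inv_smul_mul_eq v q (δ ^ 2) h2 h5]
    split_ifs <;> simp [smul_smul, hδ.ne']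

theorem statement_9 {d : ℕ} {N : Fin d → ℕ} (q : ∀ a, Fin (N a) → ℝ)
    (hq : ∀ a i, 0 < q a i) (hstate : ∑ a, ∑ i, q a i = 1)
    (δ : ℝ) (hδ : 0 < δ) (hδform : ∀ a, ∑ i, (q a i)⁻¹ = δ ^ 2)
    (m : ℕ) (hm : (m : ℝ) = δ ^ 2)
    (A : Type*) [NormedRing A] [StarRing A] [CStarRing A] [CompleteSpace A]
    [NormedAlgebra ℂ A] [StarModule ℂ A]
    -- generators v^x_{ija} of the linking algebra C(G⁺(K_{δ²}, K(B,ψ)))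
    (v : Fin m → ∀ a : Fin d, Fin (N a) → Fin (N a) → A)
    (h1a : ∀ (x : Fin m) (a : Fin d) (k l r s : Fin (N a)),
      v x a k l * v x a r s = if l = r then v x a k s else 0)
    (h1b : ∀ (x : Fin m) (a b : Fin d), a ≠ b → ∀ (k l : Fin (N a)) (r s : Fin (N b)),
      v x a k l * v x b r s = 0)
    (h2 : ∀ (x y : Fin m) (a : Fin d) (i k : Fin (N a)),
      ∑ l, (((q a l)⁻¹ : ℝ) : ℂ) • (v x a i l * v y a l k)
        = if x = y then ((δ ^ 2 : ℝ) : ℂ) • v x a i k else 0)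
    (h3 : ∀ (x : Fin m) (a : Fin d) (k l : Fin (N a)), star (v x a k l) = v x a l k)
    (h4 : ∀ (a : Fin d) (k l : Fin (N a)),
      ∑ x, v x a k l = if k = l then ((δ ^ 2 * q a k : ℝ) : ℂ) • 1 else 0)
    (h5 : ∀ x : Fin m, ∑ a, ∑ k, v x a k k = 1)
    -- the rescaled entries u^x_{ija} = q_a(j)^{-1/2} δ^{-1} v^x_{ija}
    (u : Fin m → ∀ a : Fin d, Fin (N a) → Fin (N a) → A)
    (hu : ∀ x a i j, u x a i j = (((Real.sqrt (q a j))⁻¹ * δ⁻¹ : ℝ) : ℂ) • v x a i j) :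
    (∀ (a : Fin d) (i j k l : Fin (N a)),
      ∑ x, star (u x a i j) * u x a k l = if i = k ∧ j = l then 1 else 0) ∧
    (∀ (a b : Fin d), a ≠ b → ∀ (i j : Fin (N a)) (k l : Fin (N b)),
      ∑ x, star (u x a i j) * u x b k l = 0) ∧
    (∀ x y : Fin m,
      ∑ a, ∑ i, ∑ j, u x a i j * star (u y a i j) = if x = y then 1 else 0) :=
  statement_9_general q hq δ hδ m A v h1a h1b h2 h3 h4 h5 u hu
end

section
/- Let V and E be finite types with maps s, r : E → V (a finite directed graph), and let D be a C*-algebra. Suppose p : V → D satisfies p_v^* = p_v and p_v · p_v = p_v for all v, and S : E → D satisfies S_e^* S_e = p_{r(e)} for all e, and p_v = Σ_{e : s(e) = v} S_e S_e^* for every v ∈ V that is not a sink (i.e. for which there exists e with s(e) = v). In the matrix algebra Matrix V V D define P_v to be the matrix whose only nonzero entry is p_v in position (v,v), and Ŝ_e to be the matrix whose only nonzero entry is S_e in position (s(e), r(e)). Then: (a) the P_v are mutually orthogonal projections: P_v^* = P_v, P_v · P_v = P_v, and P_v · P_w = 0 for v ≠ w; (b) Ŝ_e^* Ŝ_e = P_{r(e)}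 for all e; (c) P_v = Σ_{e : s(e) = v} Ŝ_e Ŝ_e^* for every v that is not a sink. That is, {P_v, Ŝ_e} is a Cuntz–Krieger E-family in Matrix V V D. -/
/-!
Each relation among the matrices lives in a single entry, where it is the corresponding relation
in `A`; orthogonality of the diagonal matrices is free, because `single v v a * single w w b = 0`
for `v ≠ w` whatever `a` and `b` are.
-/

open Finset Matrix

section

variable {V E A : Type*} [Fintype E] [DecidableEq V] [NonUnitalNonAssocSemiring A] [StarRing A]

theorem Matrix.isStarProjection_single [Fintype V] {a : A} (ha : IsStarProjection a) (i : V) :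
    IsStarProjection (single i i a) where
  isIdempotentElem := by rw [IsIdempotentElem, single_mul_single_same, ha.isIdempotentElem.eq]
  isSelfAdjoint := by
    rw [IsSelfAdjoint, star_eq_conjTranspose, conjTranspose_single, ha.isSelfAdjoint.star_eq]

structure IsFreeCuntzKriegerFamily (s r : E → V) (p : V → A) (S : E → A) : Prop where
  isStarProjection : ∀ v, IsStarProjection (p v)
  star_mul_self : ∀ e, star (S e) * S e = p (r e)
  eq_sum_mul_star : ∀ v, (∃ e, s e = v) →
    p v = ∑ e ∈ univ.filter (fun e => s e = v), S e * star (S e)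

structure IsCuntzKriegerFamily (s r : E → V) (p : V → A) (S : E → A) : Prop
    extends IsFreeCuntzKriegerFamily s r p S where
  mul_eq_zero_of_ne : ∀ v w, v ≠ w → p v * p w = 0

theorem IsFreeCuntzKriegerFamily.isCuntzKriegerFamily_single [Fintype V] {s r : E → V}
    {p : V → A} {S : E → A} (h : IsFreeCuntzKriegerFamily s r p S) :
    IsCuntzKriegerFamily s r (fun v => single v v (p v)) (fun e => single (s e) (r e) (S e)) where
  isStarProjection v := isStarProjection_single (h.isStarProjection v) v
  star_mul_self e := by
    rw [star_eq_conjTranspose, conjTranspose_single, single_mul_single_same, h.star_mul_self]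
  eq_sum_mul_star v hv := by
    calc single v v (p v)
        = ∑ e ∈ univ.filter (fun e => s e = v), single v v (S e * star (S e)) := by
          rw [h.eq_sum_mul_star v hv]
          exact map_sum (singleAddMonoidHom (α := A) v v) _ _
      _ = _ := by
          refine sum_congr rfl fun e he => ?_
          rw [star_eq_conjTranspose, conjTranspose_single, single_mul_single_same,
            (mem_filter.mp he).2]
  mul_eq_zero_of_ne v w hvw := single_mul_single_of_ne (p v) v v w hvw (p w)

end

theorem statement_10_general {V E : Type*} [Fintype V] [DecidableEq V] [Fintype E]
    (s r : E → V)
    (D : Type*) [NonUnitalNormedRing D] [StarRing D]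
    -- a free Cuntz-Krieger E-family (p, S) in D
    (p : V → D) (S : E → D)
    (hp1 : ∀ v, star (p v) = p v) (hp2 : ∀ v, p v * p v = p v)
    (hS : ∀ e, star (S e) * S e = p (r e))
    (hck : ∀ v, (∃ e, s e = v) →
      p v = ∑ e ∈ Finset.univ.filter (fun e => s e = v), S e * star (S e))
    -- the induced matrices P_v and Ŝ_e over D
    (P : V → Matrix V V D) (hP : ∀ v, P v = Matrix.single v v (p v))
    (T : E → Matrix V V D) (hT : ∀ e, T e = Matrix.single (s e) (r e) (S e)) :
    (∀ v, star (P v) = P v) ∧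
    (∀ v, P v * P v = P v) ∧
    (∀ v w, v ≠ w → P v * P w = 0) ∧
    (∀ e, star (T e) * T e = P (r e)) ∧
    (∀ v, (∃ e, s e = v) →
      P v = ∑ e ∈ Finset.univ.filter (fun e => s e = v), T e * star (T e)) := by
  obtain rfl : P = fun v => single v v (p v) := funext hP
  obtain rfl : T = fun e => single (s e) (r e) (S e) := funext hT
  have hfree : IsFreeCuntzKriegerFamily s r p S :=
    ⟨fun v => ⟨hp2 v, hp1 v⟩, hS, hck⟩
  obtain ⟨⟨hproj, hmul, hsum⟩, horth⟩ := hfree.isCuntzKriegerFamily_single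
  exact ⟨fun v => (hproj v).isSelfAdjoint.star_eq, fun v => (hproj v).isIdempotentElem.eq,
    horth, hmul, hsum⟩

theorem statement_10 {V E : Type*} [Fintype V] [DecidableEq V] [Fintype E]
    (s r : E → V)
    (D : Type*) [NonUnitalNormedRing D] [StarRing D] [CStarRing D] [CompleteSpace D]
    -- a free Cuntz-Krieger E-family (p, S) in D
    (p : V → D) (S : E → D)
    (hp1 : ∀ v, star (p v) = p v) (hp2 : ∀ v, p v * p v = p v)
    (hS : ∀ e, star (S e) * S e = p (r e))
    (hck : ∀ v, (∃ e, s e = v) →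
      p v = ∑ e ∈ Finset.univ.filter (fun e => s e = v), S e * star (S e))
    -- the induced matrices P_v and Ŝ_e over D
    (P : V → Matrix V V D) (hP : ∀ v, P v = Matrix.single v v (p v))
    (T : E → Matrix V V D) (hT : ∀ e, T e = Matrix.single (s e) (r e) (S e)) :
    (∀ v, star (P v) = P v) ∧
    (∀ v, P v * P v = P v) ∧
    (∀ v w, v ≠ w → P v * P w = 0) ∧
    (∀ e, star (T e) * T e = P (r e)) ∧
    (∀ v, (∃ e, s e = v) →
      P v = ∑ e ∈ Finset.univ.filter (fun e => s e = v), T e * star (T e)) :=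
  statement_10_general s r D p S hp1 hp2 hS hck P hP T hT
end

section
/- Let D be a C*-algebra (which is in particular a complex algebra), N ≥ 1, and let S_{ij} ∈ D (1 ≤ i,j ≤ N) satisfy the defining relations of the quantum Cuntz–Krieger algebra FO(TM_N) of the trivial quantum graph on M_N(ℂ): Σ_{k,l} S_{ik} S_{lk}^* S_{lj} = S_{ij} and Σ_k S_{ki}^* S_{kj} = Σ_k S_{ik} S_{jk}^* for all i, j. Let U ∈ M_N(ℂ) be a unitary matrix and λ ∈ ℂ with |λ| = 1, and define T_{ij} := λ · Σ_{p,q} U_{ip} \overline{U_{jq}} · S_{pq} (scalar multiplication in D), i.e. T = λ·U S U^*. Then the elements T_{ij} again satisfy both relations: Σ_{k,l} T_{ik} T_{lk}^* T_{lj} = T_{ij} and Σ_k T_{ki}^* T_{kj} = Σ_k T_{ik} T_{jk}^*. -/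
/-!
The relations say exactly that the matrix `S ∈ M_N(D)` is a normal partial isometry:
`S S* S = S` and `S* S = S S*`. Both properties are preserved by multiplication with a scalar
of modulus one and by conjugation with a unitary. Since `D` need not be unital, `U` is not an
element of `M_N(D)`; but `M_N(D)` embeds as a `*`-subring of `M_N(D̃)` for the unitization `D̃`,
and there `T = λ U S U*` is an honest product of matrices.
-/

open Matrix

def IsPartialIsometry {R : Type*} [Mul R] [Star R] (x : R) : Prop :=
  x * star x * x = x

section Pullback

variable {R S : Type*} [Mul R] [Star R] [Mul S] [Star S] {f : R → S}

theorem isPartialIsometry_map_iff (hf : Function.Injective f)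
    (hmul : ∀ x y, f (x * y) = f x * f y) (hstar : ∀ x, f (star x) = star (f x)) {x : R} :
    IsPartialIsometry (f x) ↔ IsPartialIsometry x := by
  simp only [IsPartialIsometry, ← hstar, ← hmul, hf.eq_iff]

theorem isStarNormal_map_iff (hf : Function.Injective f)
    (hmul : ∀ x y, f (x * y) = f x * f y) (hstar : ∀ x, f (star x) = star (f x)) {x : R} :
    IsStarNormal (f x) ↔ IsStarNormal x := by
  simp only [isStarNormal_iff, Commute, SemiconjBy, ← hstar, ← hmul, hf.eq_iff]

end Pullback

theorem IsPartialIsometry.map {F R S : Type*} [Mul R] [Star R] [Mul S] [Star S] [FunLike F R S]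
    [MulHomClass F R S] [StarHomClass F R S] (f : F) {x : R} (hx : IsPartialIsometry x) :
    IsPartialIsometry (f x) := by
  rw [IsPartialIsometry, ← map_star, ← map_mul, ← map_mul, hx]

theorem IsPartialIsometry.smul {R A : Type*} [CommMonoid R] [StarMul R] [Mul A] [Star A]
    [MulAction R A] [StarModule R A] [IsScalarTower R A A] [SMulCommClass R A A] {c : R}
    (hc : star c * c = 1) {x : A} (hx : IsPartialIsometry x) : IsPartialIsometry (c • x) := by
  unfold IsPartialIsometry at *
  rw [star_smul, smul_mul_smul_comm, smul_mul_smul_comm, hx, mul_comm c, hc, one_mul]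

namespace Matrix

variable {n : Type*} [Fintype n]

theorem isPartialIsometry_iff_sum {α : Type*} [NonUnitalSemiring α] [StarRing α]
    (X : Matrix n n α) :
    IsPartialIsometry X ↔ ∀ i j, ∑ k, ∑ l, X i k * star (X l k) * X l j = X i j := by
  simp only [IsPartialIsometry, ← Matrix.ext_iff, mul_apply, star_apply, Finset.sum_mul]
  exact forall₂_congr fun i j => by rw [Finset.sum_comm]

theorem isStarNormal_iff_sum {α : Type*} [NonUnitalSemiring α] [StarRing α] (X : Matrix n n α) :
    IsStarNormal X ↔ ∀ i j, ∑ k, star (X k i) * X k j = ∑ k, X i k * star (X j k) := by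
  simp only [isStarNormal_iff, Commute, SemiconjBy, ← Matrix.ext_iff, mul_apply,
    star_apply]

theorem map_algebraMap_mem_unitary [DecidableEq n] {R B : Type*} [CommSemiring R] [StarRing R]
    [Semiring B] [StarRing B] [Algebra R B] [StarModule R B]
    {U : Matrix n n R} (hU : U ∈ unitary (Matrix n n R)) :
    U.map (algebraMap R B) ∈ unitary (Matrix n n B) := by
  have hstar : star (U.map (algebraMap R B)) = (star U).map (algebraMap R B) :=
    (conjTranspose_map _ fun r => algebraMap_star_comm r).symm
  rw [Unitary.mem_iff] at hU ⊢
  simp only [hstar, ← Matrix.map_mul, hU.1, hU.2, Matrix.map_one _ (map_zero _) (map_one _),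
    and_self]

variable {R A : Type*} [CommRing R] [StarRing R] [NonUnitalRing A] [StarRing A]
  [Module R A]

/-- `c • U X Uᴴ`, written entrywise because `U` and `X` have entries in different rings. -/
def gaugeAct (c : R) (U : Matrix n n R) (X : Matrix n n A) : Matrix n n A :=
  of fun i j => ∑ p, ∑ q, (c * U i p * star (U j q)) • X p q

variable (R) in
theorem isPartialIsometry_map_inr_iff {X : Matrix n n A} :
    IsPartialIsometry (X.map ((↑) : A → Unitization R A)) ↔ IsPartialIsometry X :=
  isPartialIsometry_map_iff (f := fun Y : Matrix n n A => Y.map ((↑) : A → Unitization R A))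
    (map_injective Unitization.inr_injective)
    (fun _ _ => Matrix.map_mul (f := Unitization.inrNonUnitalAlgHom R A))
    (fun _ => conjTranspose_map _ fun a => Unitization.inr_star a)

variable (R) in
theorem isStarNormal_map_inr_iff {X : Matrix n n A} :
    IsStarNormal (X.map ((↑) : A → Unitization R A)) ↔ IsStarNormal X :=
  isStarNormal_map_iff (f := fun Y : Matrix n n A => Y.map ((↑) : A → Unitization R A))
    (map_injective Unitization.inr_injective)
    (fun _ _ => Matrix.map_mul (f := Unitization.inrNonUnitalAlgHom R A))
    (fun _ => conjTranspose_map _ fun a => Unitization.inr_star a)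

variable [IsScalarTower R A A] [SMulCommClass R A A] [StarModule R A] [DecidableEq n]
  {U : Matrix n n R} {X : Matrix n n A}

theorem map_inr_gaugeAct (c : R) (hU : U ∈ unitary (Matrix n n R)) :
    (gaugeAct c U X).map ((↑) : A → Unitization R A) =
      c • Unitary.conjStarAlgAut R (Matrix n n (Unitization R A))
        ⟨U.map (algebraMap R _), map_algebraMap_mem_unitary hU⟩ (X.map (↑)) := by
  have inr_eq : ∀ a : A, (a : Unitization R A) = Unitization.inrNonUnitalAlgHom R A a :=
    fun _ => rfl
  refine Matrix.ext fun i j => ?_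
  rw [gaugeAct, map_apply, of_apply, Finset.sum_comm, inr_eq, Unitary.conjStarAlgAut_apply]
  simp only [map_sum]
  simp only [← inr_eq, smul_apply, mul_apply, star_apply, map_apply, Finset.sum_mul,
    Unitization.algebraMap_eq_inl, ← Unitization.inl_star, Unitization.inl_mul_inr,
    Unitization.inr_mul_inl, Finset.smul_sum, ← Unitization.inr_smul, smul_smul]
  refine Finset.sum_congr rfl fun q _ => Finset.sum_congr rfl fun p _ => ?_
  congr 2
  ring

theorem _root_.IsPartialIsometry.gaugeAct {c : R} (hc : star c * c = 1)
    (hU : U ∈ unitary (Matrix n n R)) (hX : IsPartialIsometry X) :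
    IsPartialIsometry (gaugeAct c U X) := by
  rw [← isPartialIsometry_map_inr_iff R, map_inr_gaugeAct c hU]
  exact (((isPartialIsometry_map_inr_iff R).2 hX).map _).smul hc

theorem _root_.IsStarNormal.gaugeAct (c : R) (hU : U ∈ unitary (Matrix n n R))
    [IsStarNormal X] : IsStarNormal (gaugeAct c U X) := by
  rw [← isStarNormal_map_inr_iff R, map_inr_gaugeAct c hU]
  have : IsStarNormal (X.map ((↑) : A → Unitization R A)) :=
    (isStarNormal_map_inr_iff R).2 ‹_›
  infer_instance

end Matrix

theorem statement_11_general (D : Type*) [NonUnitalNormedRing D] [StarRing D]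
    [NormedSpace ℂ D] [IsScalarTower ℂ D D] [SMulCommClass ℂ D D]
    [StarModule ℂ D]
    (N : ℕ)
    -- generators of FO(TM_N): the relations of the trivial quantum graph on M_N(ℂ)
    (S : Fin N → Fin N → D)
    (h1 : ∀ i j, ∑ k, ∑ l, S i k * star (S l k) * S l j = S i j)
    (h2 : ∀ i j, ∑ k, star (S k i) * S k j = ∑ k, S i k * star (S j k))
    -- a unitary U ∈ M_N(ℂ) and λ ∈ U(1)
    (U : Matrix (Fin N) (Fin N) ℂ) (hU : U ∈ Matrix.unitaryGroup (Fin N) ℂ)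
    (lam : ℂ) (hlam : ‖lam‖ = 1)
    -- T = λ U S U^*
    (T : Fin N → Fin N → D)
    (hT : ∀ i j, T i j = ∑ p, ∑ q, (lam * U i p * (starRingEnd ℂ) (U j q)) • S p q) :
    (∀ i j, ∑ k, ∑ l, T i k * star (T l k) * T l j = T i j) ∧
    (∀ i j, ∑ k, star (T k i) * T k j = ∑ k, T i k * star (T j k)) := by
  have hlam_star : star lam * lam = 1 := by
    rw [RCLike.star_def, RCLike.conj_mul, hlam]; norm_num
  have hTS : of T = gaugeAct lam U (of S) := Matrix.ext hT
  have hS_normal : IsStarNormal (of S) := (isStarNormal_iff_sum _).2 h2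
  refine ⟨(isPartialIsometry_iff_sum (of T)).1 ?_, (isStarNormal_iff_sum (of T)).1 ?_⟩
  · rw [hTS]
    exact ((isPartialIsometry_iff_sum _).2 h1).gaugeAct hlam_star hU
  · rw [hTS]
    exact hS_normal.gaugeAct lam hU

theorem statement_11 (D : Type*) [NonUnitalNormedRing D] [StarRing D] [CStarRing D]
    [CompleteSpace D] [NormedSpace ℂ D] [IsScalarTower ℂ D D] [SMulCommClass ℂ D D]
    [StarModule ℂ D]
    (N : ℕ) (hN : 1 ≤ N)
    -- generators of FO(TM_N): the relations of the trivial quantum graph on M_N(ℂ)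
    (S : Fin N → Fin N → D)
    (h1 : ∀ i j, ∑ k, ∑ l, S i k * star (S l k) * S l j = S i j)
    (h2 : ∀ i j, ∑ k, star (S k i) * S k j = ∑ k, S i k * star (S j k))
    -- a unitary U ∈ M_N(ℂ) and λ ∈ U(1)
    (U : Matrix (Fin N) (Fin N) ℂ) (hU : U ∈ Matrix.unitaryGroup (Fin N) ℂ)
    (lam : ℂ) (hlam : ‖lam‖ = 1)
    -- T = λ U S U^*
    (T : Fin N → Fin N → D)
    (hT : ∀ i j, T i j = ∑ p, ∑ q, (lam * U i p * (starRingEnd ℂ) (U j q)) • S p q) :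
    (∀ i j, ∑ k, ∑ l, T i k * star (T l k) * T l j = T i j) ∧
    (∀ i j, ∑ k, star (T k i) * T k j = ∑ k, T i k * star (T j k)) :=
  statement_11_general D N S h1 h2 U hU lam hlam T hT
end

section
/- Let D be a C*-algebra, N ≥ 2, and let x_{ij} ∈ ℂ (1 ≤ i,j ≤ N) be scalars with x_{ij} = 0 whenever (i,j) ≠ (1,1). Suppose S_{ij} ∈ D (1 ≤ i,j ≤ N) satisfy the diagonal quantum graph relation Σ_k S_{ki}^* S_{kj} = x_{ij} · Σ_k S_{ik} S_{jk}^* for all i, j. Then S_{ij} = 0 for all 1 ≤ i ≤ N and all j ≥ 2. (In particular, for the diagonal quantum graph on M_N(ℂ) with x_{11} = q_1δ² and x_{ij} = 0 otherwise, the canonical linear map S : M_N(ℂ) → FO(G) into the quantum Cuntz–Krieger algebra is not injective.) -/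
theorem statement_13 (D : Type*) [NonUnitalNormedRing D] [StarRing D] [CStarRing D]
    [CompleteSpace D] [PartialOrder D] [StarOrderedRing D]
    [NormedSpace ℂ D] [IsScalarTower ℂ D D] [SMulCommClass ℂ D D] [StarModule ℂ D]
    (N : ℕ) (hN : 2 ≤ N)
    -- scalars x_{ij} vanishing away from position (1,1) (zero-indexed: (0,0))
    (x : Fin N → Fin N → ℂ)
    (hx : ∀ i j : Fin N, ¬(i.val = 0 ∧ j.val = 0) → x i j = 0)
    -- elements satisfying the diagonal quantum graph relation
    (S : Fin N → Fin N → D)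
    (h2 : ∀ i j, ∑ k, star (S k i) * S k j = x i j • ∑ k, S i k * star (S j k)) :
    ∀ (i j : Fin N), j.val ≠ 0 → S i j = 0 := by
  intro i j hj
  have hxjj : x j j = 0 := hx j j (by simp [hj])
  have hsum : ∑ k, star (S k j) * S k j = 0 := by
    rw [h2 j j, hxjj, zero_smul]
  have hterm : ∀ k ∈ Finset.univ, star (S k j) * S k j = 0 := by
    rw [← Finset.sum_eq_zero_iff_of_nonneg (fun k _ => star_mul_self_nonneg (S k j))]
    exact hsum
  have := hterm i (Finset.mem_univ i)
  exact (CStarRing.star_mul_self_eq_zero_iff _).mp this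
end

section
/- Let N ≥ 1, ω = e^{2πi/N}, and let D be a unital C*-algebra. For an arbitrary family of elements S_{lm} ∈ D indexed by l, m ∈ ℤ/N, and for j, k ∈ ℤ/N, define the matrix T_{jk} ∈ Matrix (ℤ/N) (ℤ/N) D by T_{jk} := (1/N) Σ_{l,m ∈ ℤ/N} ω^{(j−k)l} · S_{lm} · E_{j−m, k−m}, where E_{pq} denotes the matrix with 1·1_D in position (p,q) and 0 elsewhere, and ω^{(j−k)l} is well-defined since ω^N = 1. Let X̂, Ẑ ∈ Matrix (ℤ/N) (ℤ/N) D be the scalar matrices with entries X̂_{pq} = δ_{pq} ω^p · 1_D and Ẑ_{pq} = δ_{p, q+1} · 1_D (the generalized Pauli matrices). Then for all j, k ∈ ℤ/N: X̂ · T_{jk} · X̂^* = ω^{j−k} · T_{jk} and Ẑ^* · T_{jk} · Ẑ = T_{j−1, k−1}. -/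
/-!
Conjugation by either Pauli matrix acts on each matrix unit `E_{pq}` separately: the clock
matrix `X = diag(ω^p)` scales it by `ω^p · conj(ω^q) = ω^(p - q)`, because `p ↦ ω^p` is the
additive character `ZMod.toCircle`, and the shift matrix `Z` moves it to `E_{p-1,q-1}`. Every
matrix unit in `T_{jk}` has `p - q = j - k`, and lowering its indices by one is the same as
replacing `(j, k)` by `(j - 1, k - 1)`.
-/

open Matrix Complex
open scoped Real

namespace Matrix

variable {n α : Type*} [DecidableEq n]

section Diagonal

variable [Fintype n]

lemma diagonal_mul_single_mul_diagonal [Semiring α] (d e : n → α) (i j : n) (c : α) :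
    diagonal d * single i j c * diagonal e = single i j (d i * c * e j) := by
  ext p q
  rw [mul_diagonal, diagonal_mul]
  by_cases h : i = p ∧ j = q
  · obtain ⟨rfl, rfl⟩ := h
    simp only [single_apply_same]
  · simp only [single_apply_of_ne _ _ _ _ _ h, mul_zero, zero_mul]

lemma diagonal_smul_one_mul_single_mul_star {R : Type*} [CommSemiring R] [StarRing R]
    [Semiring α] [StarRing α] [Algebra R α] [StarModule R α] (a : n → R) (i j : n) (c : α) :
    diagonal (fun p => a p • (1 : α)) * single i j c * star (diagonal fun p => a p • (1 : α)) =
      (a i * star (a j)) • single i j c := by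
  rw [star_eq_conjTranspose, diagonal_conjTranspose, diagonal_mul_single_mul_diagonal,
    Pi.star_apply, star_smul, star_one, smul_mul_assoc, one_mul, mul_smul_comm, mul_one, smul_smul,
    mul_comm (star (a j)), smul_single]

end Diagonal

def shiftMatrix [Add n] [Zero α] [One α] (a : n) : Matrix n n α :=
  of fun p q => if p = q + a then 1 else 0

section Shift

variable [AddGroup n] [Fintype n] [Semiring α]

lemma single_mul_shiftMatrix (a i j : n) (c : α) :
    single i j c * shiftMatrix a = single i (j - a) c := by
  ext p q
  simp [single_apply, shiftMatrix, Matrix.mul_apply, eq_sub_iff_add_eq, eq_comm]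

variable [StarRing α]

lemma star_shiftMatrix_mul_single (a i j : n) (c : α) :
    star (shiftMatrix a) * single i j c = single (i - a) j c := by
  rw [← star_star (single i j c), ← star_mul, star_eq_conjTranspose (single i j c),
    conjTranspose_single, single_mul_shiftMatrix, star_eq_conjTranspose, conjTranspose_single,
    star_star]

lemma star_shiftMatrix_mul_single_mul_shiftMatrix (a i j : n) (c : α) :
    star (shiftMatrix a) * single i j c * shiftMatrix a = single (i - a) (j - a) c := by
  rw [star_shiftMatrix_mul_single, single_mul_shiftMatrix]

end Shift

end Matrix

section RootOfUnity

variable {N : ℕ} [NeZero N]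

lemma exp_two_pi_I_div_pow_val (j : ZMod N) :
    exp (2 * π * I / N) ^ j.val = ZMod.toCircle j := by
  rw [ZMod.toCircle_apply, ← exp_nat_mul]
  ring_nf

lemma exp_two_pi_I_div_pow_val_mul_star (i j : ZMod N) :
    exp (2 * π * I / N) ^ i.val * star (exp (2 * π * I / N) ^ j.val) =
      exp (2 * π * I / N) ^ (i - j).val := by
  rw [exp_two_pi_I_div_pow_val, exp_two_pi_I_div_pow_val, exp_two_pi_I_div_pow_val, star_def,
    ← Circle.coe_inv_eq_conj, ← AddChar.map_neg_eq_inv, ← Circle.coe_mul,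
    ← AddChar.map_add_eq_mul, sub_eq_add_neg]

end RootOfUnity

theorem statement_14_general (N : ℕ) [NeZero N]
    (D : Type*) [NormedRing D] [StarRing D]
    [NormedAlgebra ℂ D] [StarModule ℂ D]
    (ω : ℂ) (hω : ω = Complex.exp (2 * Real.pi * Complex.I / N))
    -- an arbitrary family of elements S_{lm} of D
    (S : ZMod N → ZMod N → D)
    -- the matrices T_{jk} = (1/N) Σ_{l,m} ω^{(j-k)l} S_{lm} E_{j-m,k-m}
    (T : ZMod N → ZMod N → Matrix (ZMod N) (ZMod N) D)
    (hT : ∀ j k, T j k = (N : ℂ)⁻¹ • ∑ l, ∑ m,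
      (ω ^ (((j - k) * l).val)) • Matrix.single (j - m) (k - m) (S l m))
    -- the generalized Pauli matrices over D
    (X Z : Matrix (ZMod N) (ZMod N) D)
    (hX : X = Matrix.diagonal fun p => (ω ^ p.val) • (1 : D))
    (hZ : Z = Matrix.of fun p q => if p = q + 1 then (1 : D) else 0) :
    (∀ j k, X * T j k * star X = (ω ^ ((j - k).val)) • T j k) ∧
    (∀ j k, star Z * T j k * Z = T (j - 1) (k - 1)) := by
  change Z = shiftMatrix 1 at hZ
  subst hω hX hZ
  refine ⟨fun j k => ?_, fun j k => ?_⟩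
  · simp only [hT, mul_smul_comm, smul_mul_assoc, Finset.mul_sum, Finset.sum_mul,
      diagonal_smul_one_mul_single_mul_star, exp_two_pi_I_div_pow_val_mul_star,
      sub_sub_sub_cancel_right, Finset.smul_sum]
    simp only [smul_comm _ (exp (2 * π * I / N) ^ (j - k).val)]
  · simp only [hT, mul_smul_comm, smul_mul_assoc, Finset.mul_sum, Finset.sum_mul,
      star_shiftMatrix_mul_single_mul_shiftMatrix, sub_sub_sub_cancel_right,
      sub_right_comm _ _ (1 : ZMod N)]

theorem statement_14 (N : ℕ) [NeZero N]
    (D : Type*) [NormedRing D] [StarRing D] [CStarRing D] [CompleteSpace D]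
    [NormedAlgebra ℂ D] [StarModule ℂ D]
    (ω : ℂ) (hω : ω = Complex.exp (2 * Real.pi * Complex.I / N))
    -- an arbitrary family of elements S_{lm} of D
    (S : ZMod N → ZMod N → D)
    -- the matrices T_{jk} = (1/N) Σ_{l,m} ω^{(j-k)l} S_{lm} E_{j-m,k-m}
    (T : ZMod N → ZMod N → Matrix (ZMod N) (ZMod N) D)
    (hT : ∀ j k, T j k = (N : ℂ)⁻¹ • ∑ l, ∑ m,
      (ω ^ (((j - k) * l).val)) • Matrix.single (j - m) (k - m) (S l m))
    -- the generalized Pauli matrices over D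
    (X Z : Matrix (ZMod N) (ZMod N) D)
    (hX : X = Matrix.diagonal fun p => (ω ^ p.val) • (1 : D))
    (hZ : Z = Matrix.of fun p q => if p = q + 1 then (1 : D) else 0) :
    (∀ j k, X * T j k * star X = (ω ^ ((j - k).val)) • T j k) ∧
    (∀ j k, star Z * T j k * Z = T (j - 1) (k - 1)) :=
  statement_14_general N D ω hω S T hT X Z hX hZ
end

section
/- Let V be a finite set, B : V × V → {0,1}, and let C be a unital C*-algebra. Suppose C contains a system of N×N matrix units: elements e_{ij} ∈ C (1 ≤ i,j ≤ N) with e_{ij} e_{kl} = δ_{jk} e_{il}, e_{ij}^* = e_{ji}, and Σ_{i=1}^N e_{ii} = 1. Suppose also C contains elements S_e for e ∈ V satisfying S_e S_e^* S_e = S_e and S_e^* S_e = Σ_{f ∈ V} B(e,f) · S_f S_f^* (a free Cuntz–Krieger B-family of partial isometries). Define T_{eij} := Σ_{k=1}^N e_{ki} S_e e_{jk}. Then for all e ∈ V and 1 ≤ i,j ≤ N: (1) Σ_{k,l=1}^N T_{eik} T_{elk}^* T_{elj} = T_{eij}, and (2) Σ_{k=1}^N T_{eki}^* T_{ekj} =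 Σ_{k=1}^N Σ_{f ∈ V} B(e,f) · T_{fik} T_{fjk}^*. (These are the defining relations of the quantum Cuntz–Krieger algebra FO(M_N(G)) of the amplified quantum graph, so the assignment S_{eij} ↦ T_{eij} defines a *-homomorphism FO(M_N(G)) → M_N(ℂ) *₁ FO(G)⁺.) -/
theorem statement_16 {V : Type*} [Fintype V]
    (C : Type*) [NormedRing C] [StarRing C] [CStarRing C] [CompleteSpace C]
    [NormedAlgebra ℂ C] [StarModule ℂ C]
    (B : V → V → ℂ) (hB : ∀ v w, B v w = 0 ∨ B v w = 1)
    (N : ℕ) (hN : 1 ≤ N)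
    -- a system of N×N matrix units in C
    (mu : Fin N → Fin N → C)
    (hmu1 : ∀ i j k l : Fin N, mu i j * mu k l = if j = k then mu i l else 0)
    (hmu2 : ∀ i j : Fin N, star (mu i j) = mu j i)
    (hmu3 : ∑ i, mu i i = 1)
    -- a free Cuntz-Krieger B-family of partial isometries in C
    (S : V → C)
    (hS1 : ∀ v, S v * star (S v) * S v = S v)
    (hS2 : ∀ v, star (S v) * S v = ∑ w, B v w • (S w * star (S w)))
    -- the elements T_{eij} = Σ_k e_{ki} S_e e_{jk}
    (T : V → Fin N → Fin N → C)
    (hT : ∀ v i j, T v i j = ∑ k, mu k i * S v * mu j k) :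
    (∀ (v : V) (i j : Fin N),
      ∑ k, ∑ l, T v i k * star (T v l k) * T v l j = T v i j) ∧
    (∀ (v : V) (i j : Fin N),
      ∑ k, star (T v k i) * T v k j
        = ∑ k, ∑ w, B v w • (T w i k * star (T w j k))) := by
  -- define P x i j := ∑ a, mu a i * x * mu j a
  have hmid : ∀ (c d : C) (p q r s : Fin N),
      (c * mu p q) * (mu r s * d) = if q = r then c * mu p s * d else 0 := by
    intro c d p q r s
    rw [mul_assoc, ← mul_assoc (mu p q), hmu1]
    split
    · rw [mul_assoc]
    · simp
  have key : ∀ (x y : C) (i j : Fin N),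
      (∑ k, (∑ a, mu a i * x * mu k a) * (∑ b, mu b k * y * mu j b))
      = ∑ a, mu a i * (x * y) * mu j a := by
    intro x y i j
    have hterm : ∀ k a b : Fin N,
        (mu a i * x * mu k a) * (mu b k * y * mu j b)
        = if a = b then mu a i * x * mu k k * (y * mu j b) else 0 := by
      intro k a b
      rw [mul_assoc (mu b k) y (mu j b), hmid]
    calc (∑ k, (∑ a, mu a i * x * mu k a) * (∑ b, mu b k * y * mu j b))
        = ∑ k, ∑ a, ∑ b, (mu a i * x * mu k a) * (mu b k * y * mu j b) := by
          simp_rw [Finset.sum_mul, Finset.mul_sum]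
      _ = ∑ k, ∑ a, mu a i * x * mu k k * (y * mu j a) := by
          refine Finset.sum_congr rfl fun k _ => Finset.sum_congr rfl fun a _ => ?_
          simp_rw [hterm]
          simp
      _ = ∑ a, mu a i * x * (∑ k, mu k k) * (y * mu j a) := by
          rw [Finset.sum_comm]
          simp [Finset.mul_sum, Finset.sum_mul]
      _ = ∑ a, mu a i * (x * y) * mu j a := by
          rw [hmu3]
          refine Finset.sum_congr rfl fun a _ => ?_
          simp [mul_assoc]
  have hstar : ∀ (x : C) (i j : Fin N),
      star (∑ a, mu a i * x * mu j a) = ∑ a, mu a j * star x * mu i a := by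
    intro x i j
    rw [star_sum]
    refine Finset.sum_congr rfl fun a _ => ?_
    simp [star_mul, hmu2, mul_assoc]
  have hTstar : ∀ (v : V) (i j : Fin N),
      star (T v i j) = ∑ a, mu a j * star (S v) * mu i a := by
    intro v i j; rw [hT, hstar]
  constructor
  · intro v i j
    rw [Finset.sum_comm]
    have step1 : ∀ l : Fin N,
        (∑ k, T v i k * star (T v l k) * T v l j)
        = (∑ a, mu a i * (S v * star (S v)) * mu l a) * T v l j := by
      intro l
      rw [← Finset.sum_mul, ← key (S v) (star (S v)) i l]
      congr 1
      refine Finset.sum_congr rfl fun k _ => ?_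
      rw [hTstar, hT]
    calc (∑ l, ∑ k, T v i k * star (T v l k) * T v l j)
        = ∑ l, (∑ a, mu a i * (S v * star (S v)) * mu l a) * T v l j := by
          refine Finset.sum_congr rfl fun l _ => step1 l
      _ = ∑ a, mu a i * (S v * star (S v) * S v) * mu j a := by
          simp_rw [hT]
          rw [key (S v * star (S v)) (S v) i j]
      _ = T v i j := by rw [hS1, hT]
  · intro v i j
    have lhs : (∑ k, star (T v k i) * T v k j)
        = ∑ a, mu a i * (star (S v) * S v) * mu j a := by
      rw [← key (star (S v)) (S v) i j]
      refine Finset.sum_congr rfl fun k _ => ?_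
      rw [hTstar, hT]
    rw [lhs, hS2]
    have rhs : (∑ k, ∑ w, B v w • (T w i k * star (T w j k)))
        = ∑ w, B v w • ∑ a, mu a i * (S w * star (S w)) * mu j a := by
      rw [Finset.sum_comm]
      refine Finset.sum_congr rfl fun w _ => ?_
      rw [← Finset.smul_sum]
      congr 1
      rw [← key (S w) (star (S w)) i j]
      refine Finset.sum_congr rfl fun k _ => ?_
      rw [hTstar, hT]
    rw [rhs]
    simp_rw [Finset.mul_sum, Finset.sum_mul, Finset.smul_sum, mul_smul_comm, smul_mul_assoc]
    rw [Finset.sum_comm]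
end

section
/- Let V be a finite set, B : V × V → {0,1}, N ≥ 1, and let D be a C*-algebra containing elements S_{eij} (e ∈ V, 1 ≤ i,j ≤ N) satisfying Σ_{r,s=1}^N S_{eir} S_{esr}^* S_{esj} = S_{eij} and Σ_{k=1}^N S_{eki}^* S_{ekj} = Σ_{k=1}^N Σ_{f ∈ V} B(e,f) · S_{fik} S_{fjk}^* for all e, i, j. For each e ∈ V define the matrix F_e ∈ Matrix (Fin N) (Fin N) D by (F_e)_{ij} := S_{eij}. Then each F_e is a partial isometry, i.e. F_e F_e^* F_e = F_e, and F_e^* F_e = Σ_{f ∈ V} B(e,f) · F_f F_f^* for all e ∈ V; that is, the matrices F_e form a free Cuntz–Krieger B-family in Matrix (Fin N) (Fin N) D. -/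
theorem statement_17 {V : Type*} [Fintype V]
    (D : Type*) [NonUnitalNormedRing D] [StarRing D] [CStarRing D] [CompleteSpace D]
    [NormedSpace ℂ D] [IsScalarTower ℂ D D] [SMulCommClass ℂ D D] [StarModule ℂ D]
    (B : V → V → ℂ) (hB : ∀ v w, B v w = 0 ∨ B v w = 1)
    (N : ℕ) (hN : 1 ≤ N)
    -- generators of FO(M_N(G)): relations of the amplified quantum graph
    (S : V → Fin N → Fin N → D)
    (h1 : ∀ (v : V) (i j : Fin N), ∑ r, ∑ s, S v i r * star (S v s r) * S v s j = S v i j)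
    (h2 : ∀ (v : V) (i j : Fin N), ∑ k, star (S v k i) * S v k j
      = ∑ k, ∑ w, B v w • (S w i k * star (S w j k)))
    -- the matrices F_e = (S_{eij})_{ij}
    (F : V → Matrix (Fin N) (Fin N) D)
    (hF : ∀ v, F v = Matrix.of fun i j => S v i j) :
    (∀ v, F v * star (F v) * F v = F v) ∧
    (∀ v, star (F v) * F v = ∑ w, B v w • (F w * star (F w))) := by
  constructor
  · intro v
    ext i j
    simp only [hF, Matrix.mul_apply, Matrix.star_apply, Matrix.of_apply,
      Finset.sum_mul, Finset.mul_sum]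
    rw [← h1 v i j]
    rw [Finset.sum_comm]
  · intro v
    ext i j
    simp only [hF, Matrix.mul_apply, Matrix.star_apply, Matrix.of_apply,
      Matrix.sum_apply, Matrix.smul_apply, Finset.smul_sum]
    rw [h2 v i j, Finset.sum_comm]
end

section
/- Let D be a C*-algebra, N ≥ 1, and let S_{ij} ∈ D (1 ≤ i,j ≤ N) satisfy the defining relations of the quantum Cuntz–Krieger algebra FO(K(M_N(ℂ),tr)): Σ_{k,l} S_{ik} S_{lk}^* S_{lj} = S_{ij} and Σ_r S_{ri}^* S_{rj} = δ_{ij} · N · Σ_{r,s} S_{rs} S_{rs}^* for all i, j. Set e := N · Σ_{k,l} S_{kl} S_{kl}^*. Then Σ_r S_{ri}^* S_{ri} = e for every i, and S_{ij} · e = S_{ij} for all i, j; in other words, e is a right unit for all the generators. -/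
theorem statement_18 (D : Type*) [NonUnitalNormedRing D] [StarRing D] [CStarRing D]
    [CompleteSpace D] [NormedSpace ℂ D] [IsScalarTower ℂ D D] [SMulCommClass ℂ D D]
    [StarModule ℂ D]
    (N : ℕ) (hN : 1 ≤ N)
    -- generators of FO(K(M_N(ℂ), tr)): relations of the complete quantum graph on M_N(ℂ)
    (S : Fin N → Fin N → D)
    (h1 : ∀ i j, ∑ k, ∑ l, S i k * star (S l k) * S l j = S i j)
    (h2 : ∀ i j, ∑ r, star (S r i) * S r j
      = if i = j then (N : ℂ) • ∑ r, ∑ s, S r s * star (S r s) else 0)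
    -- the element e = N Σ_{k,l} S_{kl} S_{kl}^*
    (e : D) (he : e = (N : ℂ) • ∑ k, ∑ l, S k l * star (S k l)) :
    (∀ i, ∑ r, star (S r i) * S r i = e) ∧
    (∀ i j, S i j * e = S i j) := by
  constructor
  · intro i
    simpa [he] using h2 i i
  · intro i j
    have key : ∀ k, ∑ l, star (S l k) * S l j = if k = j then e else 0 := by
      intro k
      rw [h2 k j, he]
    calc S i j * e = ∑ k, S i k * (if k = j then e else 0) := by
          simp [mul_ite, mul_zero]
      _ = ∑ k, S i k * ∑ l, star (S l k) * S l j := by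
          simp_rw [key]
      _ = ∑ k, ∑ l, S i k * star (S l k) * S l j := by
          simp_rw [Finset.mul_sum, mul_assoc]
      _ = S i j := h1 i j
end
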